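/- Let Φ be an affine root system and c a Coxeter element in its Weyl group. For every m ∈ ℤ and every β ∈ c^m T^→_c one has K(γ_c, β) > 0, while for every m ∈ ℤ and every β ∈ c^m T^←_c one has K(γ_c, β) < 0. In particular, the orbits of roots in T^→_c are separated from the orbits of roots in T^←_c by the hyperplane U_c = {v : K(γ_c, v) = 0}. -/

import Mathlib

open scoped BigOperators

noncomputable section

/-- A symmetrizable generalized Cartan matrix of affine type, together with the
coefficient vector `dz` of the primitive positive imaginary root `δ` spanning the
(one dimensional) kernel of the associated symmetric bilinear form. -/
structure AffineGCM (n : ℕ) where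
  /-- the generalized Cartan matrix -/
  a : Matrix (Fin n) (Fin n) ℤ
  /-- symmetrizing factors -/
  d : Fin n → ℝ
  diag : ∀ i, a i i = 2
  offdiag : ∀ i j, i ≠ j → a i j ≤ 0
  d_pos : ∀ i, 0 < d i
  symmetrizable : ∀ i j, d i * (a i j : ℝ) = d j * (a j i : ℝ)
  /-- `K` is positive semidefinite (on the real span of the simple roots) -/
  posSemidef : ∀ g : Fin n → ℝ, 0 ≤ ∑ i, ∑ j, g i * g j * (d i * (a i j : ℝ))
  /-- `K` is not positive definite -/
  not_posDef : ∃ g : Fin n → ℝ, g ≠ 0 ∧ ∑ i, ∑ j, g i * g j * (d i * (a i j : ℝ)) = 0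
  /-- the restriction of `K` to the span of every proper subset of the simple roots
  is positive definite -/
  proper_posDef : ∀ J : Finset (Fin n), J ≠ Finset.univ →
    ∀ g : Fin n → ℝ, (∀ i, i ∉ J → g i = 0) → g ≠ 0 →
      0 < ∑ i, ∑ j, g i * g j * (d i * (a i j : ℝ))
  /-- coordinates of the positive imaginary root `δ` in the basis of simple roots -/
  dz : Fin n → ℤ
  dz_pos : ∀ i, 0 < dz i
  /-- `δ` is the imaginary root closest to the origin: its coordinates are coprime -/
  dz_prim : Finset.univ.gcd dz = 1
  /-- `δ` spans the kernel of `K` -/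
  dz_ker : ∀ j, ∑ i, (dz i : ℝ) * (d i * (a i j : ℝ)) = 0

namespace AffineGCM

variable {n : ℕ}

/-- The ambient vector space `V`, with the simple roots as standard basis. -/
abbrev V (n : ℕ) := Fin n → ℂ

/-- the simple root `α i` (the `i`-th standard basis vector) -/
def α (i : Fin n) : V n := Pi.single i 1

/-- a vector is *positive* if it lies in the nonnegative real span of the simple roots -/
def IsPosRoot (v : V n) : Prop := ∀ i, 0 ≤ (v i).re ∧ (v i).im = 0

/-- a vector is *negative* if it lies in the nonpositive real span of the simple roots -/
def IsNegRoot (v : V n) : Prop := ∀ i, (v i).re ≤ 0 ∧ (v i).im = 0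

/-- the `g`-orbit of `x`: all `g ^ k • x` for integers `k` -/
def orbit (g : V n ≃ₗ[ℂ] V n) (x : V n) : Set (V n) := Set.range fun k : ℤ => (g ^ k) x

/-- `U g`: the span of all eigenvectors of `g`, i.e. the direct sum of its eigenspaces -/
def eigSpan (g : V n ≃ₗ[ℂ] V n) : Submodule ℂ (V n) :=
  ⨆ μ : ℂ, Module.End.eigenspace (g : Module.End ℂ (V n)) μ

/-- the span `V_fin` of the simple roots other than `α aff` -/
def Vfin (aff : Fin n) : Submodule ℂ (V n) :=
  Submodule.span ℂ (α '' {i : Fin n | i ≠ aff})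

variable (C : AffineGCM n)

/-- the simple coroot `α i ^ ∨ = (d i)⁻¹ • α i` -/
def coroot (i : Fin n) : V n := ((C.d i : ℂ))⁻¹ • α i

/-- The symmetric bilinear form `K`, determined by `K (coroot i) (α j) = a i j`,
that is, `K (α i) (α j) = d i * a i j`. -/
def K : V n →ₗ[ℂ] V n →ₗ[ℂ] ℂ :=
  LinearMap.mk₂ ℂ
    (fun x y => ∑ i, ∑ j, x i * y j * ((C.d i : ℂ) * (C.a i j : ℂ)))
    (fun x x' y => by
      simp only [Pi.add_apply, add_mul, Finset.sum_add_distrib])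
    (fun r x y => by
      simp only [Pi.smul_apply, smul_eq_mul, Finset.mul_sum]
      exact Finset.sum_congr rfl fun i _ => Finset.sum_congr rfl fun j _ => by ring)
    (fun x y y' => by
      simp only [Pi.add_apply, mul_add, add_mul, Finset.sum_add_distrib])
    (fun r x y => by
      simp only [Pi.smul_apply, smul_eq_mul, Finset.mul_sum]
      exact Finset.sum_congr rfl fun i _ => Finset.sum_congr rfl fun j _ => by ring)

/-- the linear map `v ↦ v - K x v • y`; reflections are special cases -/
def reflMap (x y : V n) : V n →ₗ[ℂ] V n where
  toFun v := v - C.K x v • y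
  map_add' u v := by simp only [map_add, add_smul]; abel
  map_smul' r u := by simp only [map_smul, smul_eq_mul, RingHom.id_apply, smul_sub, smul_smul]

lemma reflMap_apply (x y v : V n) : C.reflMap x y v = v - C.K x v • y := rfl

/-- the simple reflection `s i` as a linear endomorphism -/
def sLin (i : Fin n) : V n →ₗ[ℂ] V n := C.reflMap (C.coroot i) (α i)

lemma K_α_α (i j : Fin n) : C.K (α i) (α j) = (C.d i : ℂ) * (C.a i j : ℂ) := by
  simp [K, α, LinearMap.mk₂_apply, Pi.single_apply, ite_mul, zero_mul,
    Finset.sum_ite_eq', Finset.mem_univ]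

lemma K_coroot_α (i j : Fin n) : C.K (C.coroot i) (α j) = (C.a i j : ℂ) := by
  have hd : (C.d i : ℂ) ≠ 0 := by exact_mod_cast ne_of_gt (C.d_pos i)
  simp only [coroot, map_smul, LinearMap.smul_apply, smul_eq_mul, K_α_α]
  field_simp

lemma sLin_invol (i : Fin n) (v : V n) : C.sLin i (C.sLin i v) = v := by
  have h2 : C.K (C.coroot i) (α i) = 2 := by
    rw [K_coroot_α, C.diag]; norm_num
  simp only [sLin, reflMap_apply, map_sub, map_smul, h2, smul_eq_mul]
  module

/-- the simple reflection `s i` -/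
def s (i : Fin n) : V n ≃ₗ[ℂ] V n :=
  LinearEquiv.ofLinear (C.sLin i) (C.sLin i)
    (LinearMap.ext fun v => C.sLin_invol i v) (LinearMap.ext fun v => C.sLin_invol i v)

/-- the Weyl group `W`, as a subgroup of the group of linear automorphisms of `V` -/
def Wgroup : Subgroup (V n ≃ₗ[ℂ] V n) := Subgroup.closure (Set.range C.s)

/-- the Coxeter element `c = s 1 * s 2 * ⋯ * s n` -/
def cox : V n ≃ₗ[ℂ] V n := (List.ofFn C.s).prod

/-- the positive imaginary root `δ` -/
def δv : V n := fun i => ((C.dz i : ℤ) : ℂ)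

/-- the set of real roots: `W`-images of the simple roots -/
def realRoots : Set (V n) := {v | ∃ w ∈ C.Wgroup, ∃ i, w (α i) = v}

/-- the root system `Φ`: real roots together with the imaginary roots `k • δ`, `k ≠ 0` -/
def Φ : Set (V n) := C.realRoots ∪ {v | ∃ k : ℤ, k ≠ 0 ∧ v = (k : ℂ) • C.δv}

/-- `T→ = {α 1, s 1 α 2, …, s 1 ⋯ s (n-1) α n}` -/
def Tproj : Set (V n) :=
  Set.range fun k : Fin n => ((List.ofFn C.s).take k.val).prod (α k)

/-- `T← = {α n, s n α (n-1), …, s n ⋯ s 2 α 1}` -/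
def Tinj : Set (V n) :=
  Set.range fun k : Fin n => ((List.ofFn C.s).reverse.take (n - 1 - k.val)).prod (α k)

/-- `Φ_fin`, the finite root system `Φ ∩ V_fin` -/
def Φfin (aff : Fin n) : Set (V n) := C.Φ ∩ (Vfin aff : Set (V n))

/-- the root `θ = δ - [δ : α aff] • α aff` of `Φ_fin` -/
def θv (aff : Fin n) : V n := C.δv - ((C.dz aff : ℤ) : ℂ) • α aff

/-- the reflection `t β : v ↦ v - K (β^∨) v • β` in a (real) root `β`,
where `β^∨ = (2 / K β β) • β` -/
def tRefl (β : V n) : V n →ₗ[ℂ] V n := C.reflMap ((2 / C.K β β) • β) β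

/-- `c_◁ = s 1 * ⋯ * s (aff - 1)` -/
def cleft (aff : Fin n) : V n →ₗ[ℂ] V n := ((List.ofFn C.sLin).take aff.val).prod

/-- `c_▷ = s (aff + 1) * ⋯ * s n` -/
def cright (aff : Fin n) : V n →ₗ[ℂ] V n := ((List.ofFn C.sLin).drop (aff.val + 1)).prod

/-- `Υ^fin = Φ_fin ∩ U c` -/
def Υfin (aff : Fin n) : Set (V n) := C.Φfin aff ∩ (eigSpan C.cox : Set (V n))

/-- `B` is a simple system for a set `Θ` of roots: a linearly independent subset of `Θ`
such that every element of `Θ` is a nonnegative or a nonpositive combination of `B`. -/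
def IsSimpleSystem (Θ : Set (V n)) (B : Finset (V n)) : Prop :=
  ↑B ⊆ Θ ∧ LinearIndependent ℂ (fun b : B => (b : V n)) ∧
    ∀ v ∈ Θ, ∃ g : V n → ℝ, ((∀ b ∈ B, 0 ≤ g b) ∨ (∀ b ∈ B, g b ≤ 0)) ∧
      v = ∑ b ∈ B, (g b : ℂ) • b

/-- two roots of `Θ` are connected if they are joined by a chain of roots of `Θ`
that are pairwise non-orthogonal (with respect to `K`) -/
def Connected (Θ : Set (V n)) (x y : V n) : Prop :=
  Relation.ReflTransGen (fun u v => u ∈ Θ ∧ v ∈ Θ ∧ C.K u v ≠ 0) x y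

/-- the irreducible component of `x` in `Θ` -/
def component (Θ : Set (V n)) (x : V n) : Set (V n) := {y | y ∈ Θ ∧ C.Connected Θ x y}

/-- a set of roots is of finite type `A` if it consists exactly of the vectors
`±(β i + β (i+1) + ⋯ + β j)` for a linearly independent family `β 1, …, β k` -/
def IsTypeA (Θ : Set (V n)) : Prop :=
  ∃ (k : ℕ) (β : Fin k → V n), LinearIndependent ℂ β ∧ (∀ i, β i ∈ Θ) ∧
    Θ = {v | ∃ i j : Fin k, i ≤ j ∧
      (v = ∑ l ∈ Finset.Icc i j, β l ∨ v = -∑ l ∈ Finset.Icc i j, β l)}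

/-- `Ω = {β 1, t (β 1) (β 2), …, t (β 1) ⋯ t (β (m-1)) (β m)}` for an ordered
tuple `β` of roots -/
def Ωset {m : ℕ} (β : Fin m → V n) : Set (V n) :=
  Set.range fun j : Fin m => (((List.ofFn fun i => C.tRefl (β i)).take j.val).prod) (β j)

/-- `s i` is initial in a Coxeter element `c` if `c` is the product of a permutation
of all the simple reflections starting with `s i` -/
def IsInitial (i : Fin n) (c : V n ≃ₗ[ℂ] V n) : Prop :=
  ∃ l : List (Fin n), (i :: l).Perm (List.finRange n) ∧ ((i :: l).map C.s).prod = c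

/-- `s i` is final in a Coxeter element `c` if `c` is the product of a permutation
of all the simple reflections ending with `s i` -/
def IsFinal (i : Fin n) (c : V n ≃ₗ[ℂ] V n) : Prop :=
  ∃ l : List (Fin n), (l ++ [i]).Perm (List.finRange n) ∧ ((l ++ [i]).map C.s).prod = c

/-- the skew-symmetric bilinear form `ω_c`, determined by
`ω_c (coroot i) (α j) = a i j` if `i > j`, `= 0` if `i = j`, `= -a i j` if `i < j` -/
def ω : V n →ₗ[ℂ] V n →ₗ[ℂ] ℂ :=
  LinearMap.mk₂ ℂ
    (fun x y => ∑ i, ∑ j, x i * y j *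
      ((if j < i then 1 else if i = j then 0 else -1) * ((C.d i : ℂ) * (C.a i j : ℂ))))
    (fun x x' y => by
      simp only [Pi.add_apply, add_mul, Finset.sum_add_distrib])
    (fun r x y => by
      simp only [Pi.smul_apply, smul_eq_mul, Finset.mul_sum]
      exact Finset.sum_congr rfl fun i _ => Finset.sum_congr rfl fun j _ => by ring)
    (fun x y y' => by
      simp only [Pi.add_apply, mul_add, add_mul, Finset.sum_add_distrib])
    (fun r x y => by
      simp only [Pi.smul_apply, smul_eq_mul, Finset.mul_sum]
      exact Finset.sum_congr rfl fun i _ => Finset.sum_congr rfl fun j _ => by ring)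

/-!
Since `c γ = γ + δ` and `δ` spans the radical of `K`, the functional `K γ` is `c`-invariant:
`K γ (c x) = K (c γ) (c x) = K γ x`. Splitting `c = (s₁ ⋯ s_{k-1}) s_k (s_{k+1} ⋯ s_n)` and
reading off the `k`-th coordinate of `c γ - γ = δ` gives `K γ (s₁ ⋯ s_{k-1} α_k) = d_k δ_k > 0`
and `K γ (s_n ⋯ s_{k+1} α_k) = -d_k δ_k < 0`.

For the hyperplane: by invariance every eigenvector of `c` with eigenvalue `μ ≠ 1` lies in
`ker (K γ)`, and the fixed vectors of `c` are the multiples of `δ`. Conversely, `c` preserves the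
positive semidefinite Hermitian form `K (x̄, y)`, whose null vectors are the multiples of `δ`.
This rules out every Jordan block of `c` except the one spanned by `γ, δ`, so
`V = ℂ γ ⊕ U_c`, and `ker (K γ) = U_c` because `K γ ≠ 0`.
-/

end AffineGCM

lemma LinearMap.apply_self_eq_zero_of_jordan_chain {E : Type*} [AddCommGroup E] [Module ℂ E]
    {H : E →ₗ⋆[ℂ] E →ₗ[ℂ] ℂ} {f : E →ₗ[ℂ] E} (hf : ∀ x y, H (f x) (f y) = H x y)
    {μ : ℂ} {v w z : E} (hv : f v = μ • v + w) (hw : f w = μ • w + z)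
    (hzl : ∀ x, H z x = 0) (hzr : ∀ x, H x z = 0) : H w w = 0 := by
  have hww := hf w w
  have hwv := hf w v
  rw [hw] at hww hwv
  rw [hv] at hwv
  simp only [map_add, LinearMap.map_smulₛₗ, LinearMap.add_apply, LinearMap.smul_apply, hzl, hzr,
    smul_eq_mul, add_zero] at hww hwv
  -- `hww` and `hwv` say `(|μ|² - 1) H w w = 0` and `(|μ|² - 1) H w v + μ̄ H w w = 0`.
  by_contra hD
  have hN : starRingEnd ℂ μ * μ = 1 := mul_right_cancel₀ hD (by linear_combination hww)
  have hμ : starRingEnd ℂ μ * H w w = 0 := by linear_combination hwv - H w v * hN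
  rw [(mul_eq_zero.mp hμ).resolve_right hD, zero_mul] at hN
  exact zero_ne_one hN

lemma Module.End.maxGenEigenspace_le {R M : Type*} [CommRing R] [AddCommGroup M] [Module R M]
    {f : Module.End R M} {μ : R} {X : Submodule R M} (hX : ∀ v, f v - μ • v ∈ X → v ∈ X) :
    f.maxGenEigenspace μ ≤ X := by
  intro v hv
  obtain ⟨k, hk⟩ := (f.mem_maxGenEigenspace μ v).mp hv
  clear hv
  induction k generalizing v with
  | zero => rw [pow_zero, Module.End.one_apply] at hk; exact hk ▸ X.zero_mem
  | succ k ih =>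
    rw [pow_succ, Module.End.mul_apply] at hk
    exact hX v (by simpa using ih hk)

lemma LinearMap.ker_eq_of_sup_span_eq_top {K E : Type*} [Field K] [AddCommGroup E] [Module K E]
    {φ : E →ₗ[K] K} {U : Submodule K E} {x : E} (hφ : φ ≠ 0) (hU : U ≤ LinearMap.ker φ)
    (htop : Submodule.span K {x} ⊔ U = ⊤) : LinearMap.ker φ = U := by
  have hdecomp : ∀ y, ∃ t : K, ∃ u ∈ U, y = t • x + u := fun y => by
    obtain ⟨_, ha, u, hu, rfl⟩ := Submodule.mem_sup.mp (htop ▸ Submodule.mem_top : y ∈ _)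
    obtain ⟨t, rfl⟩ := Submodule.mem_span_singleton.mp ha
    exact ⟨t, u, hu, rfl⟩
  have hφU : ∀ u ∈ U, φ u = 0 := fun u hu => hU hu
  have hx : φ x ≠ 0 := fun h0 => hφ <| LinearMap.ext fun y => by
    obtain ⟨t, u, hu, rfl⟩ := hdecomp y
    simp [h0, hφU u hu]
  refine le_antisymm (fun y hy => ?_) hU
  obtain ⟨t, u, hu, rfl⟩ := hdecomp y
  have ht : t * φ x = 0 := by simpa [hφU u hu] using hy
  rwa [(mul_eq_zero.mp ht).resolve_right hx, zero_smul, zero_add]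

open scoped ComplexOrder in
lemma Matrix.PosSemidef.map_ofReal {ι : Type*} [Fintype ι] {M : Matrix ι ι ℝ}
    (hM : M.PosSemidef) : (M.map Complex.ofReal).PosSemidef := by
  obtain ⟨m, v, rfl⟩ := Matrix.posSemidef_iff_eq_sum_vecMulVec.mp hM
  have hmap : (∑ i, Matrix.vecMulVec (v i) (star (v i))).map Complex.ofReal =
      ∑ i, Matrix.vecMulVec (fun j => (v i j : ℂ)) (star fun j => (v i j : ℂ)) := by
    ext; simp [Matrix.vecMulVec, Matrix.sum_apply]
  rw [hmap]
  exact Matrix.posSemidef_sum _ fun i _ => Matrix.posSemidef_vecMulVec_self_star _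

namespace AffineGCM

variable {n : ℕ} (C : AffineGCM n)

section Gram

open Matrix

def gram : Matrix (Fin n) (Fin n) ℝ := Matrix.of fun i j => C.d i * C.a i j

lemma gram_isSymm : C.gram.IsSymm :=
  IsSymm.ext fun i j => (C.symmetrizable i j).symm

lemma K_apply_eq_dotProduct (x y : V n) : C.K x y = x ⬝ᵥ C.gram.map Complex.ofReal *ᵥ y := by
  simp only [K, LinearMap.mk₂_apply, dotProduct, mulVec, Finset.mul_sum]
  refine Finset.sum_congr rfl fun i _ => Finset.sum_congr rfl fun j _ => ?_
  simp only [gram, map_apply, of_apply, Complex.ofReal_mul, Complex.ofReal_intCast]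
  ring

lemma K_comm (x y : V n) : C.K x y = C.K y x := by
  have hG : (C.gram.map Complex.ofReal)ᵀ = C.gram.map Complex.ofReal := by
    rw [← transpose_map, C.gram_isSymm.eq]
  rw [K_apply_eq_dotProduct, K_apply_eq_dotProduct, dotProduct_mulVec, dotProduct_comm, ← hG,
    vecMul_transpose, hG]

lemma K_α_left (i : Fin n) (y : V n) : C.K (α i) y = (C.gram.map Complex.ofReal *ᵥ y) i := by
  rw [K_apply_eq_dotProduct, α, single_one_dotProduct]

lemma K_α_eq_mul_K_coroot (i : Fin n) (y : V n) :
    C.K (α i) y = C.d i * C.K (C.coroot i) y := by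
  have hd : (C.d i : ℂ) ≠ 0 := by exact_mod_cast (C.d_pos i).ne'
  rw [coroot, map_smul, LinearMap.smul_apply, smul_eq_mul, mul_inv_cancel_left₀ hd]

lemma gram_mulVec_δv : C.gram.map Complex.ofReal *ᵥ C.δv = 0 := by
  ext i
  have h := congrArg Complex.ofReal (C.dz_ker i)
  push_cast at h
  rw [Pi.zero_apply, ← h, mulVec, dotProduct]
  refine Finset.sum_congr rfl fun j _ => ?_
  have hs : (C.d i : ℂ) * C.a i j = C.d j * C.a j i := by
    exact_mod_cast congrArg Complex.ofReal (C.symmetrizable i j)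
  simp only [map_apply, gram, of_apply, δv, Complex.ofReal_mul, Complex.ofReal_intCast, hs]
  ring

lemma K_δv_right (x : V n) : C.K x C.δv = 0 := by
  rw [K_apply_eq_dotProduct, gram_mulVec_δv, dotProduct_zero]

lemma K_δv_left (y : V n) : C.K C.δv y = 0 := by
  rw [K_comm, K_δv_right]

lemma K_star_star (x y : V n) : C.K (star x) (star y) = star (C.K x y) := by
  simp [K_apply_eq_dotProduct, dotProduct, mulVec, star_sum, mul_comm]

lemma nonempty (C : AffineGCM n) : Nonempty (Fin n) := by
  obtain ⟨g, hg, -⟩ := C.not_posDef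
  obtain ⟨i, -⟩ := Function.ne_iff.mp hg
  exact ⟨i⟩

lemma dotProduct_gram_mulVec (g : Fin n → ℝ) :
    g ⬝ᵥ C.gram *ᵥ g = ∑ i, ∑ j, g i * g j * (C.d i * C.a i j) := by
  simp only [dotProduct, mulVec, gram, of_apply, Finset.mul_sum]
  exact Finset.sum_congr rfl fun i _ => Finset.sum_congr rfl fun j _ => by ring

lemma gram_posSemidef : C.gram.PosSemidef :=
  .of_dotProduct_mulVec_nonneg (isHermitian_iff_isSymm.mpr C.gram_isSymm) fun g => by
    rw [star_trivial, dotProduct_gram_mulVec]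
    exact C.posSemidef g

lemma eq_zero_of_gram_mulVec_eq_zero {g : Fin n → ℝ} (hg : C.gram *ᵥ g = 0) {i₀ : Fin n}
    (hi₀ : g i₀ = 0) : g = 0 := by
  by_contra hne
  have hpos := C.proper_posDef _ (Finset.erase_ne_self.mpr (Finset.mem_univ i₀)) g
    (fun i hi => by simp_all) hne
  rw [← dotProduct_gram_mulVec, hg, dotProduct_zero] at hpos
  exact lt_irrefl 0 hpos

lemma eq_smul_δv_of_gram_mulVec_eq_zero {v : V n} (hv : C.gram.map Complex.ofReal *ᵥ v = 0) :
    ∃ t : ℂ, v = t • C.δv := by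
  obtain ⟨i₀⟩ := C.nonempty
  -- `u` below vanishes at `i₀`, and so do its real and imaginary parts, which lie in the
  -- radical of the real form: `proper_posDef` forces them to vanish.
  have hdz : (C.dz i₀ : ℂ) ≠ 0 := by exact_mod_cast (C.dz_pos i₀).ne'
  set u := v - (v i₀ / C.dz i₀) • C.δv with hu_def
  have hu : C.gram.map Complex.ofReal *ᵥ u = 0 := by
    rw [hu_def, mulVec_sub, mulVec_smul, hv, gram_mulVec_δv, smul_zero, sub_zero]
  have hui₀ : u i₀ = 0 := by
    simp only [hu_def, Pi.sub_apply, Pi.smul_apply, δv, smul_eq_mul]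
    field_simp
    ring
  have hre : (fun i => (u i).re) = 0 := by
    refine C.eq_zero_of_gram_mulVec_eq_zero (funext fun i => ?_) (i₀ := i₀) (by simp [hui₀])
    simpa [mulVec, dotProduct, Complex.re_sum] using congrArg Complex.re (congrFun hu i)
  have him : (fun i => (u i).im) = 0 := by
    refine C.eq_zero_of_gram_mulVec_eq_zero (funext fun i => ?_) (i₀ := i₀) (by simp [hui₀])
    simpa [mulVec, dotProduct, Complex.im_sum] using congrArg Complex.im (congrFun hu i)
  refine ⟨v i₀ / C.dz i₀, sub_eq_zero.mp (funext fun i => Complex.ext ?_ ?_)⟩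
  · exact congrFun hre i
  · exact congrFun him i

def hermForm : V n →ₗ⋆[ℂ] V n →ₗ[ℂ] ℂ := C.K.comp (starLinearEquiv ℂ : V n ≃ₗ⋆[ℂ] V n).toLinearMap

lemma hermForm_apply (x y : V n) : C.hermForm x y = C.K (star x) y := rfl

lemma eq_smul_δv_of_hermForm_self_eq_zero {w : V n} (hw : C.hermForm w w = 0) :
    ∃ t : ℂ, w = t • C.δv := by
  rw [hermForm_apply, K_apply_eq_dotProduct] at hw
  exact C.eq_smul_δv_of_gram_mulVec_eq_zero
    ((C.gram_posSemidef.map_ofReal.dotProduct_mulVec_zero_iff w).mp hw)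

end Gram

lemma s_apply (i : Fin n) (v : V n) : C.s i v = v - C.K (C.coroot i) v • α i := rfl

lemma s_apply_of_ne {i j : Fin n} (h : j ≠ i) (v : V n) : C.s i v j = v j := by
  simp [s_apply, α, h]

lemma s_apply_self (i : Fin n) (v : V n) : C.s i v i = v i - C.K (C.coroot i) v := by
  simp [s_apply, α]

lemma s_α (i : Fin n) : C.s i (α i) = -α i := by
  rw [s_apply, K_coroot_α, C.diag]
  module

lemma s_δv (i : Fin n) : C.s i C.δv = C.δv := by
  rw [s_apply, K_comm, K_δv_left, zero_smul, sub_zero]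

lemma K_s_s (i : Fin n) (x y : V n) : C.K (C.s i x) (C.s i y) = C.K x y := by
  have hαα : C.K (α i) (α i) = 2 * C.d i := by rw [K_α_α, C.diag]; push_cast; ring
  simp only [s_apply, map_sub, map_smul, LinearMap.sub_apply, LinearMap.smul_apply, smul_eq_mul]
  rw [hαα, C.K_comm x (α i), C.K_α_eq_mul_K_coroot i x, C.K_α_eq_mul_K_coroot i y]
  ring

lemma s_inv (i : Fin n) : (C.s i)⁻¹ = C.s i :=
  inv_eq_of_mul_eq_one_left (LinearEquiv.ext fun v => C.sLin_invol i v)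

lemma s_s_apply (i : Fin n) (v : V n) : C.s i (C.s i v) = v := C.sLin_invol i v

lemma K_s_apply_α (i : Fin n) (x : V n) : C.K (C.s i x) (α i) = -C.K x (α i) := by
  rw [← C.K_s_s i, s_s_apply, s_α, map_neg]

lemma star_s (i : Fin n) (v : V n) : star (C.s i v) = C.s i (star v) := by
  have hα : star (α i : V n) = α i := by ext j; simp [α, Pi.single_apply]
  have hc : star (C.coroot i) = C.coroot i := by
    ext j; simp only [coroot, α, Pi.star_apply, Pi.smul_apply, Pi.single_apply]; split_ifs <;> simp
  rw [s_apply, s_apply, star_sub, star_smul, hα, ← K_star_star, hc]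

lemma Wgroup_induction {p : (V n ≃ₗ[ℂ] V n) → Prop} (one : p 1)
    (mul : ∀ i w, p w → p (C.s i * w)) {w : V n ≃ₗ[ℂ] V n} (hw : w ∈ C.Wgroup) : p w := by
  induction hw using Subgroup.closure_induction_left with
  | one => exact one
  | mul_left _ hx w _ h => obtain ⟨i, rfl⟩ := hx; exact mul i w h
  | inv_mul_cancel _ hx w _ h => obtain ⟨i, rfl⟩ := hx; rw [s_inv]; exact mul i w h

lemma K_apply_apply_of_mem_Wgroup {w : V n ≃ₗ[ℂ] V n} (hw : w ∈ C.Wgroup) (x y : V n) :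
    C.K (w x) (w y) = C.K x y :=
  C.Wgroup_induction (p := fun w => ∀ x y, C.K (w x) (w y) = C.K x y) (fun _ _ => rfl)
    (fun i _ h x y => (C.K_s_s i _ _).trans (h x y)) hw x y

lemma apply_δv_of_mem_Wgroup {w : V n ≃ₗ[ℂ] V n} (hw : w ∈ C.Wgroup) : w C.δv = C.δv :=
  C.Wgroup_induction (p := fun w => w C.δv = C.δv) rfl
    (fun i _ h => (congrArg (C.s i) h).trans (C.s_δv i)) hw

lemma star_apply_of_mem_Wgroup {w : V n ≃ₗ[ℂ] V n} (hw : w ∈ C.Wgroup) (v : V n) :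
    star (w v) = w (star v) :=
  C.Wgroup_induction (p := fun w => ∀ v, star (w v) = w (star v)) (fun _ => rfl)
    (fun i _ h v => (C.star_s i _).trans (congrArg (C.s i) (h v))) hw v

lemma prod_mem_Wgroup {l : List (V n ≃ₗ[ℂ] V n)} (hl : l.Sublist (List.ofFn C.s)) :
    l.prod ∈ C.Wgroup :=
  Subgroup.list_prod_mem _ fun _ he =>
    Subgroup.subset_closure (List.mem_ofFn.mp (hl.subset he))

def coxPrefix (k : ℕ) : V n ≃ₗ[ℂ] V n := ((List.ofFn C.s).take k).prod

def coxSuffix (k : ℕ) : V n ≃ₗ[ℂ] V n := ((List.ofFn C.s).drop k).prod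

lemma cox_mem_Wgroup : C.cox ∈ C.Wgroup := C.prod_mem_Wgroup (List.Sublist.refl _)

lemma coxPrefix_mem_Wgroup (k : ℕ) : C.coxPrefix k ∈ C.Wgroup :=
  C.prod_mem_Wgroup (List.take_sublist _ _)

lemma coxSuffix_mem_Wgroup (k : ℕ) : C.coxSuffix k ∈ C.Wgroup :=
  C.prod_mem_Wgroup (List.drop_sublist _ _)

lemma coxPrefix_mul_coxSuffix (k : ℕ) : C.coxPrefix k * C.coxSuffix k = C.cox :=
  List.prod_take_mul_prod_drop _ _

lemma coxSuffix_eq_s_mul (k : Fin n) : C.coxSuffix k = C.s k * C.coxSuffix (k + 1) := by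
  rw [coxSuffix, List.drop_eq_getElem_cons (by simp), List.prod_cons, List.getElem_ofFn]
  rfl

lemma coxSuffix_of_le {k : ℕ} (hk : n ≤ k) : C.coxSuffix k = 1 := by
  rw [coxSuffix, List.drop_eq_nil_of_le (by simpa using hk), List.prod_nil]

lemma prod_apply_of_forall_ne {l : List (V n ≃ₗ[ℂ] V n)} {k : Fin n}
    (hl : ∀ e ∈ l, ∃ j ≠ k, e = C.s j) (v : V n) : l.prod v k = v k := by
  induction l generalizing v with
  | nil => rfl
  | cons e l ih =>
    obtain ⟨j, hj, rfl⟩ := hl e List.mem_cons_self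
    exact (C.s_apply_of_ne (Ne.symm hj) _).trans
      (ih (fun e he => hl e (List.mem_cons_of_mem _ he)) v)

lemma coxPrefix_apply_self (k : Fin n) (v : V n) : C.coxPrefix k v k = v k := by
  refine C.prod_apply_of_forall_ne (fun e he => ?_) v
  obtain ⟨j, hj, rfl⟩ := List.mem_take_iff_getElem.mp he
  have hjk : j < k := hj.trans_le (min_le_left _ _)
  exact ⟨⟨j, by omega⟩, Fin.ne_of_val_ne hjk.ne, List.getElem_ofFn ..⟩

lemma coxSuffix_succ_apply_self (k : Fin n) (v : V n) : C.coxSuffix (k + 1) v k = v k := by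
  refine C.prod_apply_of_forall_ne (fun e he => ?_) v
  obtain ⟨j, hj, rfl⟩ := List.mem_drop_iff_getElem.mp he
  exact ⟨⟨k + 1 + j, by simpa [add_comm] using hj⟩, Fin.ne_of_val_ne (by dsimp only; omega),
    List.getElem_ofFn ..⟩

lemma cox_apply_self (k : Fin n) (v : V n) :
    C.cox v k = v k - C.K (C.coroot k) (C.coxSuffix (k + 1) v) := by
  rw [← coxPrefix_mul_coxSuffix C k, LinearEquiv.mul_apply, coxPrefix_apply_self,
    coxSuffix_eq_s_mul, LinearEquiv.mul_apply, s_apply_self, coxSuffix_succ_apply_self]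

lemma take_reverse_prod_eq_coxSuffix_inv (k : Fin n) :
    ((List.ofFn C.s).reverse.take (n - 1 - k)).prod = (C.coxSuffix (k + 1))⁻¹ := by
  have hinv : ((List.ofFn C.s).drop (k + 1)).map (·⁻¹) = (List.ofFn C.s).drop (k + 1) := by
    rw [List.map_drop, List.map_ofFn]
    exact congrArg _ (congrArg _ (funext C.s_inv))
  rw [List.take_reverse, List.length_ofFn, show n - (n - 1 - k) = k + 1 by omega, coxSuffix,
    List.prod_inv_reverse, hinv]

lemma hermForm_cox_cox (x y : V n) : C.hermForm (C.cox x) (C.cox y) = C.hermForm x y := by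
  rw [hermForm_apply, C.star_apply_of_mem_Wgroup C.cox_mem_Wgroup,
    C.K_apply_apply_of_mem_Wgroup C.cox_mem_Wgroup, hermForm_apply]

lemma hermForm_δv_left (x : V n) : C.hermForm C.δv x = 0 := by
  rw [hermForm_apply, show star C.δv = C.δv by ext; simp [δv], K_δv_left]

lemma hermForm_δv_right (x : V n) : C.hermForm x C.δv = 0 := C.K_δv_right _

lemma eq_smul_δv_of_cox_apply_eq {v : V n} (hv : C.cox v = v) : ∃ t : ℂ, v = t • C.δv := by
  -- Reading `c v = v` coordinatewise, downwards from the last index, shows that every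
  -- `s k` fixes `v`.
  have hcor (k : Fin n) : C.K (C.coroot k) (C.coxSuffix (k + 1) v) = 0 :=
    sub_eq_self.mp ((C.cox_apply_self k v).symm.trans (congrFun hv k))
  have hsuf : ∀ k ≤ n, C.coxSuffix k v = v := by
    intro k hk
    induction hk using Nat.decreasingInduction with
    | self => rw [coxSuffix_of_le C le_rfl]; rfl
    | of_succ k hk ih =>
      have h0 : C.K (C.coroot ⟨k, hk⟩) v = 0 := ih ▸ hcor ⟨k, hk⟩
      rw [show C.coxSuffix k = _ from C.coxSuffix_eq_s_mul ⟨k, hk⟩, LinearEquiv.mul_apply, ih,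
        s_apply, h0, zero_smul, sub_zero]
  refine C.eq_smul_δv_of_gram_mulVec_eq_zero (funext fun k => ?_)
  rw [← K_α_left, K_α_eq_mul_K_coroot, ← hsuf (k + 1) k.isLt, hcor k, mul_zero, Pi.zero_apply]

lemma mem_eigenspace_of_sub_mem {μ : ℂ} (hμ : μ ≠ 1) {v : V n}
    (hv : C.cox v - μ • v ∈ Module.End.eigenspace (C.cox : Module.End ℂ (V n)) μ) :
    v ∈ Module.End.eigenspace (C.cox : Module.End ℂ (V n)) μ := by
  set w := C.cox v - μ • v with hw_def
  have hw : C.cox w = μ • w := Module.End.mem_eigenspace_iff.mp hv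
  have hww : C.hermForm w w = 0 :=
    LinearMap.apply_self_eq_zero_of_jordan_chain (f := C.cox.toLinearMap) C.hermForm_cox_cox
      (μ := μ) (v := v) (z := 0) (add_sub_cancel _ _).symm (by simp [hw]) (by simp) (by simp)
  obtain ⟨t, ht⟩ := C.eq_smul_δv_of_hermForm_self_eq_zero hww
  have hfix : C.cox w = w := by rw [ht, map_smul, C.apply_δv_of_mem_Wgroup C.cox_mem_Wgroup]
  have hw0 : (μ - 1) • w = 0 := by rw [sub_smul, one_smul, ← hw, hfix, sub_self]
  rw [Module.End.mem_eigenspace_iff]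
  exact sub_eq_zero.mp ((smul_eq_zero.mp hw0).resolve_left (sub_ne_zero.mpr hμ))

section Gamma

variable {γ : V n}

lemma K_cox_apply (hγ : C.cox γ - γ = C.δv) (x : V n) : C.K γ (C.cox x) = C.K γ x := by
  rw [← C.K_apply_apply_of_mem_Wgroup C.cox_mem_Wgroup γ x, sub_eq_iff_eq_add'.mp hγ, map_add,
    LinearMap.add_apply, K_δv_left, add_zero]

lemma K_zpow_cox_apply (hγ : C.cox γ - γ = C.δv) (m : ℤ) (x : V n) :
    C.K γ ((C.cox ^ m) x) = C.K γ x := by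
  induction m using Int.induction_on generalizing x with
  | zero => rfl
  | succ m ih => rw [zpow_add_one, LinearEquiv.mul_apply, ih, K_cox_apply C hγ]
  | pred m ih =>
    rw [zpow_sub_one, LinearEquiv.mul_apply, ih, ← K_cox_apply C hγ (C.cox⁻¹ x),
      LinearEquiv.coe_inv, LinearEquiv.apply_symm_apply]

lemma K_coxSuffix_succ_α (hγ : C.cox γ - γ = C.δv) (k : Fin n) :
    C.K (C.coxSuffix (k + 1) γ) (α k) = -(C.d k * C.dz k) := by
  have hk : C.K (C.coroot k) (C.coxSuffix (k + 1) γ) = -C.dz k := by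
    have h := congrFun hγ k
    rw [Pi.sub_apply, cox_apply_self] at h
    simp only [δv] at h
    linear_combination -h
  rw [K_comm, K_α_eq_mul_K_coroot, hk]
  ring

lemma K_coxPrefix_α (hγ : C.cox γ - γ = C.δv) (k : Fin n) :
    C.K γ (C.coxPrefix k (α k)) = C.d k * C.dz k := by
  calc C.K γ (C.coxPrefix k (α k))
      = C.K (C.cox γ) (C.coxPrefix k (α k)) := by
        rw [sub_eq_iff_eq_add'.mp hγ, map_add, LinearMap.add_apply, K_δv_left, add_zero]
    _ = C.K (C.s k (C.coxSuffix (k + 1) γ)) (α k) := by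
        rw [← coxPrefix_mul_coxSuffix C k, LinearEquiv.mul_apply,
          C.K_apply_apply_of_mem_Wgroup (C.coxPrefix_mem_Wgroup k), coxSuffix_eq_s_mul,
          LinearEquiv.mul_apply]
    _ = C.d k * C.dz k := by rw [K_s_apply_α, K_coxSuffix_succ_α C hγ, neg_neg]

lemma K_coxSuffix_inv_α (hγ : C.cox γ - γ = C.δv) (k : Fin n) :
    C.K γ ((C.coxSuffix (k + 1))⁻¹ (α k)) = -(C.d k * C.dz k) := by
  rw [← C.K_apply_apply_of_mem_Wgroup (C.coxSuffix_mem_Wgroup _), LinearEquiv.coe_inv,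
    LinearEquiv.apply_symm_apply, K_coxSuffix_succ_α C hγ]

lemma eigSpan_le_ker_K (hγ : C.cox γ - γ = C.δv) : eigSpan C.cox ≤ LinearMap.ker (C.K γ) := by
  refine iSup_le fun μ u hu => LinearMap.mem_ker.mpr ?_
  have hcu : C.cox u = μ • u := Module.End.mem_eigenspace_iff.mp hu
  by_cases hμ : μ = 1
  · obtain ⟨t, rfl⟩ := C.eq_smul_δv_of_cox_apply_eq (by rw [hcu, hμ, one_smul])
    rw [map_smul, K_δv_right, smul_zero]
  · have h := C.K_cox_apply hγ u
    rw [hcu, map_smul, smul_eq_mul] at h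
    exact (mul_eq_zero.mp (by linear_combination h : (μ - 1) * C.K γ u = 0)).resolve_left
      (sub_ne_zero.mpr hμ)

lemma mem_span_pair_of_sub_mem (hγ : C.cox γ - γ = C.δv) {v : V n}
    (hv : C.cox v - v ∈ Submodule.span ℂ {γ, C.δv}) : v ∈ Submodule.span ℂ {γ, C.δv} := by
  obtain ⟨a, b, hab⟩ := Submodule.mem_span_pair.mp hv
  have hcγ : C.cox γ = γ + C.δv := sub_eq_iff_eq_add'.mp hγ
  have hcδ : C.cox C.δv = C.δv := C.apply_δv_of_mem_Wgroup C.cox_mem_Wgroup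
  have hww : C.hermForm (C.cox v - v) (C.cox v - v) = 0 :=
    LinearMap.apply_self_eq_zero_of_jordan_chain (f := C.cox.toLinearMap) (μ := 1)
      (z := a • C.δv) C.hermForm_cox_cox (v := v) (by simp)
      (by simp only [LinearEquiv.coe_coe, ← hab, map_add, map_smul, hcγ, hcδ]; module)
      (by simp [hermForm_δv_left]) (by simp [hermForm_δv_right])
  obtain ⟨t, ht⟩ := C.eq_smul_δv_of_hermForm_self_eq_zero hww
  obtain ⟨s, hs⟩ := C.eq_smul_δv_of_cox_apply_eq (v := v - t • γ) (by
    rw [map_sub, map_smul, hcγ, sub_eq_iff_eq_add'.mp ht]; module)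
  exact Submodule.mem_span_pair.mpr ⟨t, s, by rw [← hs]; abel⟩

lemma span_sup_eigSpan_eq_top (hγ : C.cox γ - γ = C.δv) :
    Submodule.span ℂ {γ} ⊔ eigSpan C.cox = ⊤ := by
  refine eq_top_iff.mpr ?_
  rw [← Module.End.iSup_maxGenEigenspace_eq_top (C.cox : Module.End ℂ (V n))]
  refine iSup_le fun μ => ?_
  by_cases hμ : μ = 1
  · subst hμ
    have hδ : C.δv ∈ eigSpan C.cox := Submodule.mem_iSup_of_mem 1
      (Module.End.mem_eigenspace_iff.mpr ((C.apply_δv_of_mem_Wgroup C.cox_mem_Wgroup).trans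
        (one_smul _ _).symm))
    refine (Module.End.maxGenEigenspace_le fun v hv =>
      C.mem_span_pair_of_sub_mem hγ (by simpa using hv)).trans ?_
    rw [Submodule.span_insert]
    exact sup_le_sup_left ((Submodule.span_singleton_le_iff_mem _ _).mpr hδ) _
  · exact (Module.End.maxGenEigenspace_le fun v hv => C.mem_eigenspace_of_sub_mem hμ hv).trans
      ((le_iSup _ μ).trans le_sup_right)

lemma d_mul_dz_pos (k : Fin n) : 0 < C.d k * C.dz k :=
  mul_pos (C.d_pos k) (by exact_mod_cast C.dz_pos k)

lemma ker_K_eq_eigSpan (hγ : C.cox γ - γ = C.δv) : LinearMap.ker (C.K γ) = eigSpan C.cox := by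
  obtain ⟨k⟩ := C.nonempty
  refine LinearMap.ker_eq_of_sup_span_eq_top (fun h => ?_) (C.eigSpan_le_ker_K hγ)
    (C.span_sup_eigSpan_eq_top hγ)
  have hk := C.K_coxPrefix_α hγ k
  rw [h, LinearMap.zero_apply] at hk
  exact (C.d_mul_dz_pos k).ne' (by exact_mod_cast hk.symm)

end Gamma

theorem orbits_separated_general {n : ℕ} (C : AffineGCM n) (γ : V n) (hγ1 : C.cox γ - γ = C.δv) :
    (∀ m : ℤ, ∀ x ∈ C.Tproj, ∃ r : ℝ, 0 < r ∧ C.K γ ((C.cox ^ m) x) = (r : ℂ)) ∧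
    (∀ m : ℤ, ∀ x ∈ C.Tinj, ∃ r : ℝ, r < 0 ∧ C.K γ ((C.cox ^ m) x) = (r : ℂ)) ∧
    (∀ v : V n, v ∈ eigSpan C.cox ↔ C.K γ v = 0) := by
  refine ⟨?_, ?_, fun v => by rw [← C.ker_K_eq_eigSpan hγ1, LinearMap.mem_ker]⟩
  · rintro m _ ⟨k, rfl⟩
    refine ⟨C.d k * C.dz k, C.d_mul_dz_pos k, ?_⟩
    rw [C.K_zpow_cox_apply hγ1]
    exact (C.K_coxPrefix_α hγ1 k).trans (by push_cast; rfl)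
  · rintro m _ ⟨k, rfl⟩
    refine ⟨-(C.d k * C.dz k), neg_neg_of_pos (C.d_mul_dz_pos k), ?_⟩
    dsimp only
    rw [C.K_zpow_cox_apply hγ1, take_reverse_prod_eq_coxSuffix_inv, C.K_coxSuffix_inv_α hγ1]
    push_cast
    rfl

/-- Proposition 4.3: `K (γ_c) β > 0` for `β` in the orbit of `T→` and
`K (γ_c) β < 0` for `β` in the orbit of `T←`; in particular these orbits are
separated by the hyperplane `U c = {v : K (γ_c) v = 0}`. -/
theorem orbits_separated {n : ℕ} (C : AffineGCM n) (aff : Fin n)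
    (haff : ((Subgroup.closure (C.s '' {j : Fin n | j ≠ aff}) : Subgroup (V n ≃ₗ[ℂ] V n)) : Set (V n ≃ₗ[ℂ] V n)).Finite)
    (γ : V n) (hγ : γ ∈ Vfin aff) (hγ1 : C.cox γ - γ = C.δv) :
    (∀ m : ℤ, ∀ x ∈ C.Tproj, ∃ r : ℝ, 0 < r ∧ C.K γ ((C.cox ^ m) x) = (r : ℂ)) ∧
    (∀ m : ℤ, ∀ x ∈ C.Tinj, ∃ r : ℝ, r < 0 ∧ C.K γ ((C.cox ^ m) x) = (r : ℂ)) ∧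
    (∀ v : V n, v ∈ eigSpan C.cox ↔ C.K γ v = 0) :=
  orbits_separated_general C γ hγ1

end AffineGCM
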